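/- arXiv:1707.05559 — 2 statements merged into one kernel-verified Lean document; each statement's English description precedes it below -/
import Mathlib

section
/- Let V be a finite-dimensional real vector space, let α be a nonzero linear functional on V, and let ω be an alternating k-form on V (k ≥ 1) such that the wedge product α ∧ ω = 0. Then there exists an alternating (k−1)-form ψ on V such that ω = α ∧ ψ. -/
/-!
Pick `e` with `α e = 1` and contract with it. Contraction is an antiderivation,
`ι_e (α ∧ ω) = α e • ω - α ∧ ι_e ω`, so `α ∧ ω = 0` forces `ω = α ∧ ι_e ω`.
The antiderivation rule is read off the expansion
`(α ∧ ψ) v = ∑ i, (-1) ^ i • α (v i) • ψ (v without v i)`, i.e. `α ∧ ψ` is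
`AlternatingMap.alternatizeUncurryFin` of `v ↦ α v • ψ`; this expansion is the sum over
`(1, k)`-shuffles defining `AlternatingMap.domCoprod`.
-/

open scoped TensorProduct

/-- The wedge (exterior) product of a linear functional `α` (viewed as an alternating
1-form) with an alternating `k`-form `ψ`, yielding an alternating `(k+1)`-form. -/
noncomputable def wedge1 {V : Type*} [AddCommGroup V] [Module ℝ V] {k : ℕ}
    (α : V →ₗ[ℝ] ℝ) (ψ : V [⋀^Fin k]→ₗ[ℝ] ℝ) : V [⋀^Fin (k + 1)]→ₗ[ℝ] ℝ :=
  (((TensorProduct.lid ℝ ℝ).toLinearMap.compAlternatingMap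
      (((AlternatingMap.ofSubsingleton ℝ V ℝ (0 : Fin 1)) α).domCoprod ψ))).domDomCongr
    (finSumFinEquiv.trans (finCongr (Nat.add_comm 1 k)))

open Equiv

def finOneSumFinEquiv (k : ℕ) : Fin 1 ⊕ Fin k ≃ Fin (k + 1) :=
  finSumFinEquiv.trans (finCongr (Nat.add_comm 1 k))

@[simp]
lemma finOneSumFinEquiv_inl {k : ℕ} (a : Fin 1) : finOneSumFinEquiv k (.inl a) = 0 := by
  ext; simp [finOneSumFinEquiv]

@[simp]
lemma finOneSumFinEquiv_inr {k : ℕ} (j : Fin k) : finOneSumFinEquiv k (.inr j) = j.succ := by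
  ext; simp [finOneSumFinEquiv]

/-- The `(1, k)`-shuffle sending the `Fin 1` slot to position `i`; these represent the cosets
summed over in `AlternatingMap.domCoprod`. -/
def insertShuffle {k : ℕ} (i : Fin (k + 1)) : Perm (Fin 1 ⊕ Fin k) :=
  permCongr (finOneSumFinEquiv k).symm i.cycleRange.symm

@[simp]
lemma finOneSumFinEquiv_insertShuffle_inl {k : ℕ} (i : Fin (k + 1)) (a : Fin 1) :
    finOneSumFinEquiv k (insertShuffle i (.inl a)) = i := by
  simp [insertShuffle, permCongr_apply]

@[simp]
lemma finOneSumFinEquiv_insertShuffle_inr {k : ℕ} (i : Fin (k + 1)) (j : Fin k) :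
    finOneSumFinEquiv k (insertShuffle i (.inr j)) = i.succAbove j := by
  simp [insertShuffle, permCongr_apply]

lemma sign_insertShuffle {k : ℕ} (i : Fin (k + 1)) :
    Perm.sign (insertShuffle i) = (-1) ^ (i : ℕ) := by
  simp [insertShuffle, Perm.sign_permCongr, Fin.sign_cycleRange]

lemma bijective_mk_insertShuffle (k : ℕ) :
    Function.Bijective fun i : Fin (k + 1) =>
      (Quotient.mk'' (insertShuffle i) : Perm.ModSumCongr (Fin 1) (Fin k)) := by
  constructor
  · intro i i' hii'
    obtain ⟨⟨σ₁, σ₂⟩, hσ⟩ := QuotientGroup.leftRel_apply.mp (Quotient.exact' hii')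
    have := congrArg (fun π : Perm (Fin 1 ⊕ Fin k) => finOneSumFinEquiv k (π (.inl 0)))
      (eq_inv_mul_iff_mul_eq.mp hσ)
    simpa using this
  · refine fun σ => Quotient.inductionOn' σ fun π => ⟨finOneSumFinEquiv k (π (.inl 0)), ?_⟩
    refine Quotient.sound' (QuotientGroup.leftRel_apply.mpr ?_)
    refine Perm.mem_sumCongrHom_range_of_perm_mapsTo_inl ?_
    rintro _ ⟨a, rfl⟩
    refine ⟨0, ?_⟩
    rw [Subsingleton.elim a 0, Perm.mul_apply, eq_comm, Perm.inv_eq_iff_eq]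
    exact (finOneSumFinEquiv k).injective (by simp)

lemma Fin.removeNth_succ_vecCons {α : Type*} {n : ℕ} (x : α) (v : Fin (n + 1) → α)
    (i : Fin (n + 1)) :
    Fin.removeNth i.succ (Matrix.vecCons x v) = Matrix.vecCons x (Fin.removeNth i v) := by
  ext j
  cases j using Fin.cases <;> simp [Fin.removeNth_apply, Fin.succ_succAbove_succ]

section Wedge

variable {V : Type*} [AddCommGroup V] [Module ℝ V] {k : ℕ}

lemma wedge1_eq_alternatizeUncurryFin (α : V →ₗ[ℝ] ℝ) (ψ : V [⋀^Fin k]→ₗ[ℝ] ℝ) :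
    wedge1 α ψ = AlternatingMap.alternatizeUncurryFin (α.smulRight ψ) := by
  ext v
  change TensorProduct.lid ℝ ℝ
    ((AlternatingMap.ofSubsingleton ℝ V ℝ (0 : Fin 1) α).domCoprod ψ
      (v ∘ finOneSumFinEquiv k)) = _
  rw [AlternatingMap.domCoprod_apply, FunLike.coe_sum, Finset.sum_apply, map_sum,
    AlternatingMap.alternatizeUncurryFin_apply]
  refine (Fintype.sum_bijective _ (bijective_mk_insertShuffle k) _ _ fun i => ?_).symm
  rw [AlternatingMap.domCoprod.summand_mk'']
  simp only [_root_.smul_apply, MultilinearMap.domDomCongr_apply,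
    MultilinearMap.domCoprod_apply, AlternatingMap.coe_multilinearMap]
  rw [sign_insertShuffle, Units.smul_def, map_zsmul]
  simp only [TensorProduct.lid_tmul, zsmul_eq_mul, Function.comp_apply,
    finOneSumFinEquiv_insertShuffle_inl, finOneSumFinEquiv_insertShuffle_inr,
    AlternatingMap.ofSubsingleton_apply_apply, LinearMap.smulRight_apply,
    AlternatingMap.smul_apply]
  push_cast
  rfl

lemma curryLeft_wedge1 (α : V →ₗ[ℝ] ℝ) (ω : V [⋀^Fin (k + 1)]→ₗ[ℝ] ℝ) (e : V) :
    (wedge1 α ω).curryLeft e = α e • ω - wedge1 α (ω.curryLeft e) := by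
  ext v
  rw [AlternatingMap.curryLeft_apply_apply, AlternatingMap.sub_apply,
    wedge1_eq_alternatizeUncurryFin, wedge1_eq_alternatizeUncurryFin,
    AlternatingMap.alternatizeUncurryFin_apply, AlternatingMap.alternatizeUncurryFin_apply,
    Fin.sum_univ_succ]
  simp [Fin.removeNth_succ_vecCons, pow_succ, Finset.sum_neg_distrib, sub_eq_add_neg]

end Wedge

theorem statement0_general {V : Type*} [AddCommGroup V] [Module ℝ V]
    {m : ℕ} (α : V →ₗ[ℝ] ℝ) (hα : α ≠ 0) (ω : V [⋀^Fin (m + 1)]→ₗ[ℝ] ℝ)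
    (h : wedge1 α ω = 0) :
    ∃ ψ : V [⋀^Fin m]→ₗ[ℝ] ℝ, ω = wedge1 α ψ := by
  obtain ⟨x, hx⟩ : ∃ x, α x ≠ 0 := DFunLike.ne_iff.mp hα
  set e := (α x)⁻¹ • x
  have he : α e = 1 := by simp [e, hx]
  refine ⟨ω.curryLeft e, ?_⟩
  have key := curryLeft_wedge1 α ω e
  rwa [h, AlternatingMap.curryLeft_zero, LinearMap.zero_apply, he, one_smul, eq_comm,
    sub_eq_zero] at key

/-- If `α` is a nonzero linear functional on a finite-dimensional real vector space `V`
and `ω` is an alternating `k`-form (`k ≥ 1`, here `k = m + 1`) with `α ∧ ω = 0`, then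
`ω = α ∧ ψ` for some alternating `(k-1)`-form `ψ`. -/
theorem statement0 {V : Type*} [AddCommGroup V] [Module ℝ V] [FiniteDimensional ℝ V]
    {m : ℕ} (α : V →ₗ[ℝ] ℝ) (hα : α ≠ 0) (ω : V [⋀^Fin (m + 1)]→ₗ[ℝ] ℝ)
    (h : wedge1 α ω = 0) :
    ∃ ψ : V [⋀^Fin m]→ₗ[ℝ] ℝ, ω = wedge1 α ψ :=
  statement0_general α hα ω h
end

section
/- Let U ⊆ ℝⁿ be open, f : U → ℝ smooth, ω a smooth n-form on U, and suppose ψ₁ and ψ₂ are (n−1)-form-valued maps on U satisfying df(x) ∧ ψ₁(x) = ω(x) and df(x) ∧ ψ₂(x) = ω(x) for all x ∈ U. Then for every point x ∈ U with df(x) ≠ 0 and every family of tangent vectors v₂, …, vₙ lying in the kernel of df(x), one has ψ₁(x)(v₂, …, vₙ) = ψ₂(x)(v₂, …, vₙ); that is, the restriction of a Gelfand–Leray form to any fiber f⁻¹(t) through a regular point is uniquely determined. -/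
open scoped TensorProduct

lemma wedge1_cons {V : Type*} [AddCommGroup V] [Module ℝ V] {k : ℕ}
    (α : V →ₗ[ℝ] ℝ) (ψ : V [⋀^Fin k]→ₗ[ℝ] ℝ) (w : V) (v : Fin k → V)
    (hv : ∀ i, α (v i) = 0) :
    wedge1 α ψ (Fin.cons w v) = α w * ψ v := by
  have hes : ∀ j : Fin k,
      ((finSumFinEquiv.trans (finCongr (Nat.add_comm 1 k))) (Sum.inr j) : Fin (k+1)) = j.succ := by
    intro j
    simp [finSumFinEquiv, finCongr, Fin.natAdd, Fin.succ, Fin.ext_iff, Nat.add_comm]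
  have hu : ∀ s : Fin 1 ⊕ Fin k,
      (Fin.cons w v ∘ ⇑(finSumFinEquiv.trans (finCongr (Nat.add_comm 1 k)))) s =
      Sum.elim (fun _ => w) v s := by
    rintro (i | j)
    · have : i = 0 := Subsingleton.elim _ _
      subst this
      rfl
    · simp [hes j]
  rw [wedge1]
  rw [AlternatingMap.domDomCongr_apply, LinearMap.compAlternatingMap_apply,
    AlternatingMap.domCoprod_apply, MultilinearMap.sum_apply, map_sum]
  refine (Finset.sum_eq_single_of_mem
    (s := (Finset.univ : Finset (Equiv.Perm.ModSumCongr (Fin 1) (Fin k))))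
    (Quotient.mk'' (1 : Equiv.Perm (Fin 1 ⊕ Fin k)))
    (Finset.mem_univ _) ?_).trans ?_
  · intro q _ hq
    induction q using Quotient.inductionOn' with
    | h σ =>
      rw [AlternatingMap.domCoprod.summand_mk'']
      have hσ : ∃ j : Fin k, σ (Sum.inl 0) = Sum.inr j := by
        rcases h : σ (Sum.inl 0) with i | j
        · exfalso
          apply hq
          have hmem : σ ∈ (Equiv.Perm.sumCongrHom (Fin 1) (Fin k)).range := by
            apply Equiv.Perm.mem_sumCongrHom_range_of_perm_mapsTo_inl
            rintro x ⟨i', rfl⟩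
            have : i' = 0 := Subsingleton.elim _ _
            subst this
            exact ⟨i, h.symm⟩
          exact Quotient.sound' (QuotientGroup.leftRel_apply.mpr (by simpa using hmem))
        · exact ⟨j, rfl⟩
      obtain ⟨j, hj⟩ := hσ
      simp only [MultilinearMap.smul_apply, MultilinearMap.domDomCongr_apply,
        MultilinearMap.domCoprod_apply, hu, map_smul]
      have hz : ((((AlternatingMap.ofSubsingleton ℝ V ℝ (0 : Fin 1)) α) :
          MultilinearMap ℝ (fun _ : Fin 1 => V) ℝ)
          (fun i => Sum.elim (fun _ => w) v (σ (Sum.inl i)))) = 0 := by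
        show α (Sum.elim (fun _ => w) v (σ (Sum.inl 0))) = 0
        simp only [hj, Sum.elim_inr]
        exact hv j
      rw [hz, TensorProduct.zero_tmul, smul_zero, map_zero]
  · rw [AlternatingMap.domCoprod.summand_mk'']
    simp only [map_one, one_smul, MultilinearMap.domDomCongr_apply,
      MultilinearMap.domCoprod_apply, Equiv.Perm.coe_one, id_eq, hu]
    show (TensorProduct.lid ℝ ℝ) (α (Sum.elim (fun _ => w) v (Sum.inl 0)) ⊗ₜ[ℝ]
      ψ (fun i => Sum.elim (fun _ => w) v (Sum.inr i))) = α w * ψ v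
    simp [TensorProduct.lid_tmul]

/-- Uniqueness of the Gelfand–Leray form on regular fibers: if `ψ₁, ψ₂` both satisfy
`df(x) ∧ ψᵢ(x) = ω(x)` on `U`, then at any regular point `x` of the smooth function `f`
the two forms agree on tangent vectors to the fiber, i.e. on vectors in `ker df(x)`.
(Here `n = m + 1`.) -/
theorem statement2 {m : ℕ} {U : Set (Fin (m + 1) → ℝ)} (hU : IsOpen U)
    (f : (Fin (m + 1) → ℝ) → ℝ) (hf : ContDiffOn ℝ (⊤ : ℕ∞) f U)
    (ω : (Fin (m + 1) → ℝ) → ((Fin (m + 1) → ℝ) [⋀^Fin (m + 1)]→ₗ[ℝ] ℝ))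
    (hω : ∀ v : Fin (m + 1) → (Fin (m + 1) → ℝ), ContDiffOn ℝ (⊤ : ℕ∞) (fun x => ω x v) U)
    (ψ₁ ψ₂ : (Fin (m + 1) → ℝ) → ((Fin (m + 1) → ℝ) [⋀^Fin m]→ₗ[ℝ] ℝ))
    (h₁ : ∀ x ∈ U, wedge1 (fderiv ℝ f x : (Fin (m + 1) → ℝ) →ₗ[ℝ] ℝ) (ψ₁ x) = ω x)
    (h₂ : ∀ x ∈ U, wedge1 (fderiv ℝ f x : (Fin (m + 1) → ℝ) →ₗ[ℝ] ℝ) (ψ₂ x) = ω x) :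
    ∀ x ∈ U, fderiv ℝ f x ≠ 0 →
      ∀ v : Fin m → (Fin (m + 1) → ℝ), (∀ i, fderiv ℝ f x (v i) = 0) →
        ψ₁ x v = ψ₂ x v := by
  intro x hx hx0 v hv
  obtain ⟨w, hw⟩ : ∃ w, fderiv ℝ f x w ≠ 0 := by
    by_contra h
    push_neg at h
    exact hx0 (by ext w; simpa using h w)
  have key : wedge1 (fderiv ℝ f x : (Fin (m + 1) → ℝ) →ₗ[ℝ] ℝ) (ψ₁ x) (Fin.cons w v) =
      wedge1 (fderiv ℝ f x : (Fin (m + 1) → ℝ) →ₗ[ℝ] ℝ) (ψ₂ x) (Fin.cons w v) := by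
    rw [h₁ x hx, h₂ x hx]
  rw [wedge1_cons _ _ _ _ hv, wedge1_cons _ _ _ _ hv] at key
  exact mul_left_cancel₀ (by simpa using hw) key
end
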